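/- For every q₀ ∈ (0, 1), ∫₁^{1/q₀} (1/η) J_{[η, 2η]} dη = 2 log 2 · (log(1/q₀))² + 2 (log 2)² · log(1/q₀) − (1/2) Σ_{n=1}^∞ ((−1)^n / n³) (1 − 4^{−n}) (1 − q₀^{2n}), the series converging absolutely. -/

import Mathlib

/-!
With `L_k(x) = ∑ₙ (-1)ⁿ xⁿ⁺¹/(n+1)ᵏ` one has `L_1(x) = log (1 + x)` and
`x L_{k+1}'(x) = L_k(x)` for `|x| < 1`, so `ξ ↦ L_{k+1}(ξ⁻²)` has derivative
`-2 L_k(ξ⁻²)/ξ` for `ξ > 1`. Since `log (1 + ξ²) = log ξ² + L_1(ξ⁻²)`, the function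
`(log ξ)² - L_2(ξ⁻²)/2` is an antiderivative of `log (1 + ξ²)/ξ`, whence
`J_{[η,2η]} = 2 (log 2)² + 4 log 2 log η + L_2(η⁻²) - L_2((2η)⁻²)`.
Dividing by `η` and integrating once more produces `L_3` at `1, 1/4, q₀², q₀²/4`, and these
four values combine termwise into the series `∑ (-1)ⁿ/(n+1)³ (1 - 4⁻⁽ⁿ⁺¹⁾)(1 - q₀²⁽ⁿ⁺¹⁾)`.
-/

/-- `J_{[a,b]} = 2 ∫_a^b log(1 + ξ²)/ξ dξ`. -/
noncomputable def Jab (a b : ℝ) : ℝ := 2 * ∫ ξ in a..b, Real.log (1 + ξ ^ 2) / ξ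

open Set intervalIntegral

/-- `altPolylog k x = -Li_k(-x)`. -/
noncomputable def altPolylog (k : ℕ) (x : ℝ) : ℝ :=
  ∑' n : ℕ, (-1 : ℝ) ^ n * x ^ (n + 1) / ((n : ℝ) + 1) ^ k

lemma summable_one_div_succ_pow {k : ℕ} (hk : 2 ≤ k) :
    Summable (fun n : ℕ => 1 / ((n : ℝ) + 1) ^ k) := by
  simpa using (summable_nat_add_iff 1).mpr (Real.summable_one_div_nat_pow.mpr hk)

lemma norm_altPolylog_term_le (k n : ℕ) {x : ℝ} (hx : |x| ≤ 1) :
    ‖(-1 : ℝ) ^ n * x ^ (n + 1) / ((n : ℝ) + 1) ^ k‖ ≤ 1 / ((n : ℝ) + 1) ^ k := by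
  rw [norm_div, norm_mul, norm_pow, norm_pow, norm_neg, norm_one, one_pow, one_mul,
    Real.norm_eq_abs, Real.norm_of_nonneg (by positivity)]
  gcongr
  exact pow_le_one₀ (abs_nonneg x) hx

lemma continuousOn_altPolylog {k : ℕ} (hk : 2 ≤ k) :
    ContinuousOn (altPolylog k) (Icc (-1) 1) :=
  continuousOn_tsum (fun n => by fun_prop) (summable_one_div_succ_pow hk)
    fun n x hx => norm_altPolylog_term_le k n (abs_le.mpr hx)

lemma continuousOn_altPolylog_inv_sq {k : ℕ} (hk : 2 ≤ k) :
    ContinuousOn (fun ξ : ℝ => altPolylog k (ξ ^ 2)⁻¹) (Ici 1) := by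
  refine (continuousOn_altPolylog hk).comp (fun ξ (hξ : 1 ≤ ξ) => ?_)
    fun ξ (hξ : 1 ≤ ξ) => ?_
  all_goals have hξ0 : 0 < ξ := by linarith
  · exact ContinuousAt.continuousWithinAt (by fun_prop (disch := positivity))
  · have hpos : 0 < (ξ ^ 2)⁻¹ := by positivity
    exact ⟨by linarith, inv_le_one_of_one_le₀ (one_le_pow₀ hξ)⟩

lemma abs_inv_sq_lt_one {x : ℝ} (hx : 1 < |x|) : |(x ^ 2)⁻¹| < 1 := by
  rw [abs_inv, abs_pow]
  exact inv_lt_one_of_one_lt₀ (one_lt_pow₀ hx two_ne_zero)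

lemma altPolylog_one {x : ℝ} (hx : |x| < 1) : altPolylog 1 x = Real.log (1 + x) := by
  have h := (Real.hasSum_pow_div_log_of_abs_lt_one (x := -x) (by rwa [abs_neg])).neg
  rw [neg_neg, sub_neg_eq_add] at h
  refine (h.congr_fun fun n => ?_).tsum_eq
  ring

lemma hasDerivAt_altPolylog_succ (k : ℕ) {x : ℝ} (hx : |x| < 1) (hx0 : x ≠ 0) :
    HasDerivAt (altPolylog (k + 1)) (altPolylog k x / x) x := by
  set r := (1 + |x|) / 2
  have hr : |x| < r := by simp only [r]; linarith
  have hr1 : r < 1 := by simp only [r]; linarith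
  have hderiv : ∀ n : ℕ, ∀ y ∈ Ioo (-r) r,
      HasDerivAt (fun z : ℝ => (-1 : ℝ) ^ n * z ^ (n + 1) / ((n : ℝ) + 1) ^ (k + 1))
        ((-1 : ℝ) ^ n * y ^ n / ((n : ℝ) + 1) ^ k) y := by
    intro n y _
    refine (((hasDerivAt_pow (n + 1) y).const_mul ((-1 : ℝ) ^ n)).div_const
      (((n : ℝ) + 1) ^ (k + 1))).congr_deriv ?_
    rw [Nat.add_sub_cancel]
    push_cast
    field_simp
    ring
  have hbound : ∀ n : ℕ, ∀ y ∈ Ioo (-r) r,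
      ‖(-1 : ℝ) ^ n * y ^ n / ((n : ℝ) + 1) ^ k‖ ≤ r ^ n := by
    intro n y hy
    rw [norm_div, norm_mul, norm_pow, norm_pow, norm_neg, norm_one, one_pow, one_mul,
      Real.norm_eq_abs, Real.norm_of_nonneg (by positivity)]
    calc |y| ^ n / ((n : ℝ) + 1) ^ k ≤ |y| ^ n :=
          div_le_self (by positivity) (one_le_pow₀ (by linarith [n.cast_nonneg (α := ℝ)]))
      _ ≤ r ^ n := pow_le_pow_left₀ (abs_nonneg y) (abs_lt.mpr hy).le n
  have hr0 : 0 < r := (abs_nonneg x).trans_lt hr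
  have h := hasDerivAt_tsum_of_isPreconnected (summable_geometric_of_lt_one hr0.le hr1)
    isOpen_Ioo isPreconnected_Ioo hderiv hbound (y₀ := 0) ⟨by linarith, hr0⟩ (by simp)
    (abs_lt.mp hr)
  refine h.congr_deriv ?_
  rw [altPolylog, ← tsum_div_const]
  congr 1 with n
  field_simp
  ring

lemma hasDerivAt_altPolylog_succ_inv_sq (k : ℕ) {x : ℝ} (hx : 1 < |x|) :
    HasDerivAt (fun ξ : ℝ => altPolylog (k + 1) (ξ ^ 2)⁻¹)
      (-2 * altPolylog k (x ^ 2)⁻¹ / x) x := by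
  have hx0 : x ≠ 0 := by rintro rfl; norm_num at hx
  refine ((hasDerivAt_altPolylog_succ k (abs_inv_sq_lt_one hx) (by positivity)).comp x
    ((hasDerivAt_pow 2 x).inv (by positivity))).congr_deriv ?_
  field_simp
  ring

lemma continuousOn_altPolylog_inv_sq_two_mul {k : ℕ} (hk : 2 ≤ k) :
    ContinuousOn (fun ξ : ℝ => altPolylog k ((2 * ξ) ^ 2)⁻¹) (Ici 1) :=
  (continuousOn_altPolylog_inv_sq hk).comp (by fun_prop) fun ξ (hξ : 1 ≤ ξ) =>
    show 1 ≤ 2 * ξ by linarith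

lemma hasDerivAt_log_sq_sub_altPolylog_two {x : ℝ} (hx : 1 < |x|) :
    HasDerivAt (fun ξ : ℝ => Real.log ξ ^ 2 - altPolylog 2 (ξ ^ 2)⁻¹ / 2)
      (Real.log (1 + x ^ 2) / x) x := by
  have hx0 : x ≠ 0 := by rintro rfl; norm_num at hx
  have hlog : Real.log (1 + x ^ 2) = Real.log (x ^ 2) + Real.log (1 + (x ^ 2)⁻¹) := by
    rw [← Real.log_mul (by positivity) (by positivity), mul_add,
      mul_inv_cancel₀ (by positivity), mul_one, add_comm]
  refine (((Real.hasDerivAt_log hx0).pow 2).sub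
    ((hasDerivAt_altPolylog_succ_inv_sq 1 hx).div_const 2)).congr_deriv ?_
  rw [altPolylog_one (abs_inv_sq_lt_one hx), hlog, Real.log_pow]
  field_simp
  push_cast
  ring

lemma integral_log_one_add_sq_div {a b : ℝ} (ha : 1 ≤ a) (hab : a ≤ b) :
    ∫ ξ in a..b, Real.log (1 + ξ ^ 2) / ξ =
      (Real.log b ^ 2 - altPolylog 2 (b ^ 2)⁻¹ / 2) -
        (Real.log a ^ 2 - altPolylog 2 (a ^ 2)⁻¹ / 2) := by
  have hpos : ∀ ξ ∈ Icc a b, 0 < ξ := fun ξ hξ => by linarith [hξ.1]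
  refine integral_eq_sub_of_hasDerivAt_of_le hab
    (f := fun ξ => Real.log ξ ^ 2 - altPolylog 2 (ξ ^ 2)⁻¹ / 2) ?_ (fun x hx => ?_) ?_
  · refine ((Real.continuousOn_log.mono fun ξ hξ => (hpos ξ hξ).ne').pow 2).sub
      (((continuousOn_altPolylog_inv_sq le_rfl).mono fun ξ hξ => ?_).div_const 2)
    exact ha.trans hξ.1
  · refine hasDerivAt_log_sq_sub_altPolylog_two ?_
    rw [abs_of_pos (by linarith [hx.1])]
    linarith [hx.1]
  · refine ContinuousOn.intervalIntegrable ?_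
    rw [uIcc_of_le hab]
    exact ContinuousOn.div (by fun_prop (disch := intros; positivity)) continuousOn_id
      fun ξ hξ => (hpos ξ hξ).ne'

lemma Jab_eq {a b : ℝ} (ha : 1 ≤ a) (hab : a ≤ b) :
    Jab a b = 2 * (Real.log b ^ 2 - Real.log a ^ 2) + altPolylog 2 (a ^ 2)⁻¹ -
      altPolylog 2 (b ^ 2)⁻¹ := by
  rw [Jab, integral_log_one_add_sq_div ha hab]
  ring

lemma Jab_two_mul {η : ℝ} (hη : 1 ≤ η) :
    Jab η (2 * η) = 2 * Real.log 2 ^ 2 + 4 * Real.log 2 * Real.log η +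
      altPolylog 2 (η ^ 2)⁻¹ - altPolylog 2 ((2 * η) ^ 2)⁻¹ := by
  rw [Jab_eq hη (by linarith), Real.log_mul two_ne_zero (by positivity)]
  ring

lemma integral_inv_mul_Jab_two_mul {Q : ℝ} (hQ : 1 ≤ Q) :
    ∫ η in (1 : ℝ)..Q, (1 / η) * Jab η (2 * η) =
      2 * Real.log 2 * Real.log Q ^ 2 + 2 * Real.log 2 ^ 2 * Real.log Q +
        (altPolylog 3 1 - altPolylog 3 4⁻¹ - altPolylog 3 (Q ^ 2)⁻¹ +
          altPolylog 3 ((2 * Q) ^ 2)⁻¹) / 2 := by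
  have hpos : ∀ η ∈ Icc 1 Q, (0 : ℝ) < η := fun η hη => by linarith [hη.1]
  have hlog : ContinuousOn Real.log (Icc 1 Q) :=
    Real.continuousOn_log.mono fun η hη => (hpos η hη).ne'
  rw [integral_eq_sub_of_hasDerivAt_of_le hQ
    (f := fun η => 2 * Real.log 2 * Real.log η ^ 2 + 2 * Real.log 2 ^ 2 * Real.log η -
      (altPolylog 3 (η ^ 2)⁻¹ - altPolylog 3 ((2 * η) ^ 2)⁻¹) / 2)]
  · norm_num
    ring
  · have hL : ContinuousOn (fun η : ℝ => altPolylog 3 (η ^ 2)⁻¹) (Icc 1 Q) :=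
      (continuousOn_altPolylog_inv_sq (by norm_num)).mono fun η hη => hη.1
    have hL' : ContinuousOn (fun η : ℝ => altPolylog 3 ((2 * η) ^ 2)⁻¹) (Icc 1 Q) :=
      (continuousOn_altPolylog_inv_sq_two_mul (by norm_num)).mono fun η hη => hη.1
    exact ((continuousOn_const.mul (hlog.pow 2)).add (continuousOn_const.mul hlog)).sub
      ((hL.sub hL').div_const 2)
  · intro x hx
    have hx1 : 1 < |x| := by rw [abs_of_pos (by linarith [hx.1])]; exact hx.1
    have h2x1 : 1 < |2 * x| := by rw [abs_mul, abs_two]; linarith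
    have hx0 : x ≠ 0 := by linarith [hx.1]
    refine ((((Real.hasDerivAt_log hx0).pow 2).const_mul _).add
      ((Real.hasDerivAt_log hx0).const_mul _)).sub
      (((hasDerivAt_altPolylog_succ_inv_sq 2 hx1).sub
        ((hasDerivAt_altPolylog_succ_inv_sq 2 h2x1).comp x
          ((hasDerivAt_id x).const_mul 2))).div_const 2) |>.congr_deriv ?_
    rw [Jab_two_mul hx.1.le]
    field_simp
    ring
  · refine ContinuousOn.intervalIntegrable ?_
    rw [uIcc_of_le hQ]
    refine ContinuousOn.congr (f := fun η => 1 / η * (2 * Real.log 2 ^ 2 +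
        4 * Real.log 2 * Real.log η + altPolylog 2 (η ^ 2)⁻¹ -
          altPolylog 2 ((2 * η) ^ 2)⁻¹)) ?_
      fun η hη => by rw [Jab_two_mul hη.1]
    exact (continuousOn_const.div continuousOn_id fun η hη => (hpos η hη).ne').mul
      (((continuousOn_const.add (continuousOn_const.mul hlog)).add
        ((continuousOn_altPolylog_inv_sq le_rfl).mono fun η hη => hη.1)).sub
        ((continuousOn_altPolylog_inv_sq_two_mul le_rfl).mono fun η hη => hη.1))

lemma hasSum_altPolylog_sub_sub_add {k : ℕ} (hk : 2 ≤ k) {x y : ℝ} (hx : |x| ≤ 1)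
    (hy : |y| ≤ 1) :
    HasSum
      (fun n : ℕ => (-1 : ℝ) ^ n / ((n : ℝ) + 1) ^ k * (1 - x ^ (n + 1)) * (1 - y ^ (n + 1)))
      (altPolylog k 1 - altPolylog k x - altPolylog k y + altPolylog k (x * y)) := by
  have hasSum_altPolylog : ∀ z : ℝ, |z| ≤ 1 →
      HasSum (fun n : ℕ => (-1 : ℝ) ^ n * z ^ (n + 1) / ((n : ℝ) + 1) ^ k) (altPolylog k z) :=
    fun z hz => (Summable.of_norm_bounded (summable_one_div_succ_pow hk)
      fun n => norm_altPolylog_term_le k n hz).hasSum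
  have hxy : |x * y| ≤ 1 := by rw [abs_mul]; exact mul_le_one₀ hx (abs_nonneg y) hy
  refine ((((hasSum_altPolylog 1 (by norm_num)).sub (hasSum_altPolylog x hx)).sub
    (hasSum_altPolylog y hy)).add (hasSum_altPolylog _ hxy)).congr_fun fun n => ?_
  rw [mul_pow]
  ring

/-- **Evaluation of `∫₁^{1/q₀} (1/η) J_{[η,2η]} dη`.** For `0 < q₀ < 1`,
`∫₁^{1/q₀} (1/η) J_{[η,2η]} dη = 2 log 2 (log(1/q₀))² + 2 (log 2)² log(1/q₀)
  - (1/2) Σ_{n≥1} ((-1)^n/n³)(1 - 4^{-n})(1 - q₀^{2n})`,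
the series converging absolutely. -/
theorem stmt_11 (q₀ : ℝ) (h0 : 0 < q₀) (h1 : q₀ < 1) :
    Summable (fun n : ℕ =>
      |((-1 : ℝ) ^ (n + 1) / ((n : ℝ) + 1) ^ 3) * (1 - (4 : ℝ) ^ (-((n : ℤ) + 1))) *
        (1 - q₀ ^ (2 * (n + 1)))|) ∧
    (∫ η in (1 : ℝ)..(1 / q₀), (1 / η) * Jab η (2 * η)) =
      2 * Real.log 2 * (Real.log (1 / q₀)) ^ 2 +
        2 * (Real.log 2) ^ 2 * Real.log (1 / q₀) -
        (1 / 2) * ∑' n : ℕ, ((-1 : ℝ) ^ (n + 1) / ((n : ℝ) + 1) ^ 3) *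
          (1 - (4 : ℝ) ^ (-((n : ℤ) + 1))) * (1 - q₀ ^ (2 * (n + 1))) := by
  have hq : |q₀ ^ 2| ≤ 1 := by rw [abs_pow, abs_of_pos h0]; exact pow_le_one₀ h0.le h1.le
  have hsum := (hasSum_altPolylog_sub_sub_add (k := 3) (by norm_num) (x := 4⁻¹)
    (by norm_num [abs_of_pos]) hq).neg
  have hterm : ∀ n : ℕ, ((-1 : ℝ) ^ (n + 1) / ((n : ℝ) + 1) ^ 3) *
      (1 - (4 : ℝ) ^ (-((n : ℤ) + 1))) * (1 - q₀ ^ (2 * (n + 1))) =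
      -((-1 : ℝ) ^ n / ((n : ℝ) + 1) ^ 3 * (1 - 4⁻¹ ^ (n + 1)) *
        (1 - (q₀ ^ 2) ^ (n + 1))) := by
    intro n
    rw [show -((n : ℤ) + 1) = -((n + 1 : ℕ) : ℤ) by push_cast; ring, zpow_neg, zpow_natCast,
      inv_pow, ← pow_mul]
    ring
  simp only [hterm]
  refine ⟨summable_abs_iff.mpr hsum.summable, ?_⟩
  have hQ : 1 ≤ 1 / q₀ := by rw [le_div_iff₀ h0]; linarith
  rw [integral_inv_mul_Jab_two_mul hQ, hsum.tsum_eq,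
    show ((1 / q₀) ^ 2)⁻¹ = q₀ ^ 2 by field_simp,
    show ((2 * (1 / q₀)) ^ 2)⁻¹ = 4⁻¹ * q₀ ^ 2 by field_simp; norm_num]
  ring
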